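/- arXiv:2205.14735 — 2 statements merged into one kernel-verified Lean document; each statement's English description precedes it below -/
import Mathlib

section
/- Necessity direction of the stability region theorem: if there exists a policy assigning each arriving request of client c to a route σ ∈ F_c such that all per-node and per-link resource-load queues are rate stable, then there exist probabilities {P_c(σ)} with Σ_{σ∈F_c} P_c(σ) = 1 such that for every node i and link (i,j): Σ_{c,σ} λ^(c)·ρ_i^(c,σ)·P_c(σ) ≤ C_i and Σ_{c,σ} λ^(c)·ρ_{ij}^(c,σ)·P_c(σ) ≤ C_{ij}. -/
open MeasureTheory Filter Finset Topology

/-!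
Fix a sample path on which all the almost-sure limits hold. The time-averaged arrival rates
of the routes are bounded, so along a subsequence they converge to a vector `f`; by the rate
hypothesis `f` has mass `λ^(c)` on `F_c`. A queue fed by `x` and served at rate `C` holds at
least the cumulative input minus the cumulative service, so rate stability forces the load
`∑ σ, ρ σ * f σ` to be at most `C`. Normalising `f` on each `F_c` gives the probabilities.
-/

/-- The mean of `x` over slots `0, …, T - 1`; it is `0` for `T = 0`. -/
noncomputable def timeAverage (x : ℕ → ℝ) (T : ℕ) : ℝ := (∑ t ∈ range T, x t) / T

section TimeAverage

variable {ι : Type*}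

theorem timeAverage_nonneg {x : ℕ → ℝ} (hx : ∀ t, 0 ≤ x t) (T : ℕ) : 0 ≤ timeAverage x T :=
  div_nonneg (sum_nonneg fun t _ => hx t) T.cast_nonneg

theorem abs_timeAverage_le {x : ℕ → ℝ} {M : ℝ} (hx : ∀ t, |x t| ≤ M) (T : ℕ) :
    |timeAverage x T| ≤ M := by
  rcases T.eq_zero_or_pos with rfl | hT
  · simpa [timeAverage] using (abs_nonneg _).trans (hx 0)
  · have hT : (0 : ℝ) < T := Nat.cast_pos.2 hT
    rw [timeAverage, abs_div, Nat.abs_cast, div_le_iff₀ hT]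
    calc |∑ t ∈ range T, x t| ≤ ∑ t ∈ range T, |x t| := abs_sum_le_sum_abs _ _
      _ ≤ ∑ _t ∈ range T, M := sum_le_sum fun t _ => hx t
      _ = M * T := by rw [sum_const, card_range, nsmul_eq_mul, mul_comm]

theorem timeAverage_sum_mul (s : Finset ι) (g : ι → ℝ) (x : ι → ℕ → ℝ) (T : ℕ) :
    timeAverage (fun t => ∑ i ∈ s, g i * x i t) T = ∑ i ∈ s, g i * timeAverage (x i) T := by
  simp only [timeAverage, Finset.sum_comm (s := range T), sum_div, mul_sum, mul_div_assoc]

theorem tendsto_timeAverage_sum_mul {α : Type*} {l : Filter α} {T : α → ℕ} (s : Finset ι)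
    (g : ι → ℝ) {x : ι → ℕ → ℝ} {f : ι → ℝ}
    (h : ∀ i ∈ s, Tendsto (fun n => timeAverage (x i) (T n)) l (𝓝 (f i))) :
    Tendsto (fun n => timeAverage (fun t => ∑ i ∈ s, g i * x i t) (T n)) l
      (𝓝 (∑ i ∈ s, g i * f i)) := by
  simp only [timeAverage_sum_mul]
  exact tendsto_finsetSum s fun i hi => (h i hi).const_mul (g i)

theorem exists_strictMono_tendsto_timeAverage [Fintype ι] {x : ι → ℕ → ℝ} {M : ℝ}
    (hx : ∀ i t, |x i t| ≤ M) :
    ∃ f : ι → ℝ, ∃ φ : ℕ → ℕ, StrictMono φ ∧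
      ∀ i, Tendsto (fun n => timeAverage (x i) (φ n)) atTop (𝓝 (f i)) := by
  have hmem : ∀ T, (fun i => timeAverage (x i) T) ∈ Metric.closedBall (0 : ι → ℝ) |M| := by
    intro T
    rw [mem_closedBall_zero_iff, pi_norm_le_iff_of_nonneg (abs_nonneg M)]
    exact fun i => (abs_timeAverage_le (hx i) T).trans (le_abs_self M)
  obtain ⟨f, -, φ, hφ, hlim⟩ := tendsto_subseq_of_bounded Metric.isBounded_closedBall hmem
  exact ⟨f, φ, hφ, tendsto_pi_nhds.1 hlim⟩

end TimeAverage

section Queue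

variable {Q x : ℕ → ℝ} {C : ℝ}

theorem sum_range_sub_mul_le_of_queue (hQ0 : 0 ≤ Q 0) (hQ : ∀ t, Q t - C + x t ≤ Q (t + 1))
    (T : ℕ) : ∑ t ∈ range T, x t - T * C ≤ Q T := by
  induction T with
  | zero => simpa using hQ0
  | succ T ih =>
    rw [sum_range_succ]
    push_cast
    linarith [hQ T]

theorem timeAverage_le_div_add_of_queue (hQ0 : 0 ≤ Q 0) (hQ : ∀ t, Q t - C + x t ≤ Q (t + 1))
    {T : ℕ} (hT : 0 < T) : timeAverage x T ≤ Q T / T + C := by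
  have hT : (0 : ℝ) < T := Nat.cast_pos.2 hT
  rw [timeAverage, div_add' _ _ _ hT.ne', div_le_div_iff_of_pos_right hT]
  linarith [sum_range_sub_mul_le_of_queue hQ0 hQ T]

theorem le_of_tendsto_timeAverage_of_queue (hQ0 : 0 ≤ Q 0)
    (hQ : ∀ t, Q t - C + x t ≤ Q (t + 1))
    (hstab : Tendsto (fun T : ℕ => Q T / T) atTop (𝓝 0)) {φ : ℕ → ℕ}
    (hφ : Tendsto φ atTop atTop) {r : ℝ}
    (hx : Tendsto (fun n => timeAverage x (φ n)) atTop (𝓝 r)) : r ≤ C := by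
  have hbound : Tendsto (fun n => Q (φ n) / φ n + C) atTop (𝓝 (0 + C)) :=
    (hstab.comp hφ).add_const C
  rw [zero_add] at hbound
  refine le_of_tendsto_of_tendsto hx hbound ?_
  filter_upwards [hφ.eventually_ge_atTop 1] with n hn
  exact timeAverage_le_div_add_of_queue hQ0 hQ hn

end Queue

theorem exists_fiber_prob_mul_eq {R Cl : Type*} [Fintype R] [DecidableEq Cl] {cl : R → Cl}
    (hcl : Function.Surjective cl) {f : R → ℝ} (hf : ∀ σ, 0 ≤ f σ) :
    ∃ P : R → ℝ, (∀ σ, 0 ≤ P σ) ∧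
      (∀ c, ∑ σ ∈ univ.filter (fun σ => cl σ = c), P σ = 1) ∧
      ∀ σ, (∑ τ ∈ univ.filter (fun τ => cl τ = cl σ), f τ) * P σ = f σ := by
  classical
  choose s hs using hcl
  let m : Cl → ℝ := fun c => ∑ τ ∈ univ.filter (fun τ => cl τ = c), f τ
  have hm0 : ∀ c, 0 ≤ m c := fun c => sum_nonneg fun τ _ => hf τ
  -- on a massless fibre any distribution will do: take the point mass at `s c`
  let P : R → ℝ := fun σ =>
    if m (cl σ) = 0 then (if σ = s (cl σ) then 1 else 0) else f σ / m (cl σ)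
  refine ⟨P, fun σ => ?_, fun c => ?_, fun σ => (?_ : m (cl σ) * P σ = f σ)⟩
  · simp only [P]
    split_ifs
    exacts [zero_le_one, le_rfl, div_nonneg (hf σ) (hm0 _)]
  · have hfib : ∀ σ ∈ univ.filter (fun σ => cl σ = c),
        P σ = if m c = 0 then (if σ = s c then 1 else 0) else f σ / m c := fun σ hσ => by
      simp only [P, (mem_filter.1 hσ).2]
    rw [sum_congr rfl hfib]
    by_cases hc : m c = 0
    · simp [hc, hs c]
    · simp only [hc, if_false, ← sum_div]
      exact div_self hc
  · by_cases hσ : m (cl σ) = 0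
    · have hfσ : f σ = 0 :=
        (sum_eq_zero_iff_of_nonneg fun τ _ => hf τ).1 hσ σ (by simp)
      simp [hσ, hfσ]
    · simp only [P, hσ, if_false]
      exact mul_div_cancel₀ _ hσ

theorem stability_region_necessity_general {Ω : Type*} [MeasurableSpace Ω]
    (μ : Measure Ω) [IsProbabilityMeasure μ]
    {Cl R Nd Lk : Type*} [Fintype Cl] [Fintype R] [Fintype Nd] [Fintype Lk]
    [DecidableEq Cl]
    (cl : R → Cl) (hsur : ∀ c : Cl, ∃ σ : R, cl σ = c)
    (lam : Cl → ℝ)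
    (ρn : Nd → R → ℝ) (ρl : Lk → R → ℝ)
    (Cn : Nd → ℝ) (Cle : Lk → ℝ)
    (a : R → ℕ → Ω → ℝ) (hann : ∀ σ t ω, 0 ≤ a σ t ω)
    (M : ℝ) (habdd : ∀ σ t ω, a σ t ω ≤ M)
    (hrate : ∀ c : Cl, ∀ᵐ ω ∂μ, Tendsto
      (fun T : ℕ =>
        (∑ t ∈ Finset.range T, ∑ σ ∈ Finset.univ.filter (fun σ => cl σ = c), a σ t ω)
          / (T : ℝ))
      atTop (nhds (lam c)))
    (Qn : Nd → ℕ → Ω → ℝ) (Ql : Lk → ℕ → Ω → ℝ)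
    (hQn0 : ∀ i ω, Qn i 0 ω = 0) (hQl0 : ∀ e ω, Ql e 0 ω = 0)
    (hdynN : ∀ i t ω,
      Qn i (t + 1) ω = max (Qn i t ω - Cn i + ∑ σ, ρn i σ * a σ t ω) 0)
    (hdynL : ∀ e t ω,
      Ql e (t + 1) ω = max (Ql e t ω - Cle e + ∑ σ, ρl e σ * a σ t ω) 0)
    (hstabN : ∀ i, ∀ᵐ ω ∂μ,
      Tendsto (fun T : ℕ => Qn i T ω / (T : ℝ)) atTop (nhds 0))
    (hstabL : ∀ e, ∀ᵐ ω ∂μ,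
      Tendsto (fun T : ℕ => Ql e T ω / (T : ℝ)) atTop (nhds 0)) :
    ∃ P : R → ℝ, (∀ σ, 0 ≤ P σ) ∧
      (∀ c : Cl, ∑ σ ∈ Finset.univ.filter (fun σ => cl σ = c), P σ = 1) ∧
      (∀ i : Nd, ∑ σ : R, lam (cl σ) * ρn i σ * P σ ≤ Cn i) ∧
      (∀ e : Lk, ∑ σ : R, lam (cl σ) * ρl e σ * P σ ≤ Cle e) := by
  obtain ⟨ω, hrateω, hstabNω, hstabLω⟩ :=
    ((ae_all_iff.2 hrate).and ((ae_all_iff.2 hstabN).and (ae_all_iff.2 hstabL))).exists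
  obtain ⟨f, φ, hφ, hf⟩ := exists_strictMono_tendsto_timeAverage (x := fun σ t => a σ t ω)
    fun σ t => abs_le.2 ⟨by linarith [hann σ t ω, habdd σ t ω], habdd σ t ω⟩
  have hf0 : ∀ σ, 0 ≤ f σ := fun σ =>
    ge_of_tendsto' (hf σ) fun n => timeAverage_nonneg (fun t => hann σ t ω) _
  have hmass : ∀ c, ∑ σ ∈ univ.filter (fun σ => cl σ = c), f σ = lam c := fun c => by
    have h := tendsto_timeAverage_sum_mul (univ.filter fun σ => cl σ = c) 1 fun σ _ => hf σ
    simp only [Pi.one_apply, one_mul] at h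
    exact tendsto_nhds_unique h ((hrateω c).comp hφ.tendsto_atTop)
  have hload : ∀ (ρ : R → ℝ) (C : ℝ) (Q : ℕ → ℝ), Q 0 = 0 →
      (∀ t, Q (t + 1) = max (Q t - C + ∑ σ, ρ σ * a σ t ω) 0) →
      Tendsto (fun T : ℕ => Q T / T) atTop (𝓝 0) → ∑ σ, ρ σ * f σ ≤ C :=
    fun ρ C Q hQ0 hQ hstab => le_of_tendsto_timeAverage_of_queue hQ0.ge
      (fun t => (hQ t).symm ▸ le_max_left _ _) hstab hφ.tendsto_atTop
      (tendsto_timeAverage_sum_mul univ ρ fun σ _ => hf σ)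
  obtain ⟨P, hP0, hP1, hPf⟩ := exists_fiber_prob_mul_eq hsur hf0
  have hweighted : ∀ ρ : R → ℝ, ∑ σ, lam (cl σ) * ρ σ * P σ = ∑ σ, ρ σ * f σ := fun ρ =>
    sum_congr rfl fun σ _ => by rw [← hPf σ, hmass]; ring
  refine ⟨P, hP0, hP1, fun i => ?_, fun e => ?_⟩
  · rw [hweighted]
    exact hload _ _ _ (hQn0 i ω) (fun t => hdynN i t ω) (hstabNω i)
  · rw [hweighted]
    exact hload _ _ _ (hQl0 e ω) (fun t => hdynL e t ω) (hstabLω e)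

/-- Necessity direction of the stability region theorem. Clients `c` have routes
`F_c = {σ | cl σ = c}` (finite, nonempty), per-packet resource loads `ρn i σ` on
nodes and `ρl e σ` on links, and capacities `Cn i`, `Cle e`. If some policy
(splitting arrivals `a σ t` among routes, with the total client-`c` arrivals having
long-run average rate `λ^(c)` a.s.) makes all node and link resource-load queues
`Q(t+1) = [Q(t) - C + Σ_σ ρ·a_σ(t)]^+` rate stable a.s., then there exist
probabilities `P(σ)` with `Σ_{σ∈F_c} P(σ) = 1` such that for every node `i` and link
`e`: `Σ_σ λ^(cl σ)·ρn i σ·P(σ) ≤ Cn i` and `Σ_σ λ^(cl σ)·ρl e σ·P(σ) ≤ Cle e`. -/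
theorem stability_region_necessity {Ω : Type*} [MeasurableSpace Ω]
    (μ : Measure Ω) [IsProbabilityMeasure μ]
    {Cl R Nd Lk : Type*} [Fintype Cl] [Fintype R] [Fintype Nd] [Fintype Lk]
    [DecidableEq Cl]
    (cl : R → Cl) (hsur : ∀ c : Cl, ∃ σ : R, cl σ = c)
    (lam : Cl → ℝ) (hlam : ∀ c, 0 ≤ lam c)
    (ρn : Nd → R → ℝ) (ρl : Lk → R → ℝ)
    (hρn : ∀ i σ, 0 ≤ ρn i σ) (hρl : ∀ e σ, 0 ≤ ρl e σ)
    (Cn : Nd → ℝ) (Cle : Lk → ℝ) (hCn : ∀ i, 0 < Cn i) (hCle : ∀ e, 0 < Cle e)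
    (a : R → ℕ → Ω → ℝ) (hann : ∀ σ t ω, 0 ≤ a σ t ω)
    (M : ℝ) (habdd : ∀ σ t ω, a σ t ω ≤ M)
    (hrate : ∀ c : Cl, ∀ᵐ ω ∂μ, Tendsto
      (fun T : ℕ =>
        (∑ t ∈ Finset.range T, ∑ σ ∈ Finset.univ.filter (fun σ => cl σ = c), a σ t ω)
          / (T : ℝ))
      atTop (nhds (lam c)))
    (Qn : Nd → ℕ → Ω → ℝ) (Ql : Lk → ℕ → Ω → ℝ)
    (hQn0 : ∀ i ω, Qn i 0 ω = 0) (hQl0 : ∀ e ω, Ql e 0 ω = 0)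
    (hdynN : ∀ i t ω,
      Qn i (t + 1) ω = max (Qn i t ω - Cn i + ∑ σ, ρn i σ * a σ t ω) 0)
    (hdynL : ∀ e t ω,
      Ql e (t + 1) ω = max (Ql e t ω - Cle e + ∑ σ, ρl e σ * a σ t ω) 0)
    (hstabN : ∀ i, ∀ᵐ ω ∂μ,
      Tendsto (fun T : ℕ => Qn i T ω / (T : ℝ)) atTop (nhds 0))
    (hstabL : ∀ e, ∀ᵐ ω ∂μ,
      Tendsto (fun T : ℕ => Ql e T ω / (T : ℝ)) atTop (nhds 0)) :
    ∃ P : R → ℝ, (∀ σ, 0 ≤ P σ) ∧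
      (∀ c : Cl, ∑ σ ∈ Finset.univ.filter (fun σ => cl σ = c), P σ = 1) ∧
      (∀ i : Nd, ∑ σ : R, lam (cl σ) * ρn i σ * P σ ≤ Cn i) ∧
      (∀ e : Lk, ∑ σ : R, lam (cl σ) * ρl e σ * P σ ≤ Cle e) :=
  stability_region_necessity_general μ cl hsur lam ρn ρl Cn Cle a hann M habdd hrate Qn Ql hQn0 hQl0
    hdynN hdynL hstabN hstabL
end

section
/- Restricting to acyclic routes does not reduce the stability region: if an arrival vector λ is supported by route-selection probabilities over routes possibly containing cycles, then it is also supported by probabilities over cycle-free routes, since removing cycles from any route weakly decreases every resource load ρ_i^(c,σ) and ρ_{ij}^(c,σ). -/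
open Finset

/-- `IsWalk E u v l`: `l` is a directed walk from `u` to `v` along edges of `E`. -/
def IsWalk {V : Type*} (E : V → V → Prop) (u v : V) (l : List V) : Prop :=
  l.Chain' E ∧ l.head? = some u ∧ l.getLast? = some v

/-- Number of times the walk `l` traverses the edge `(i,j)` (with multiplicity). -/
def countEdge {V : Type*} [DecidableEq V] (l : List V) (i j : V) : ℕ :=
  (l.zip l.tail).count (i, j)

/-- A route (embedded router): processing location `p`, selected static source `v`,
and the live (`s → p`), static (`v → p`), and output (`p → d`) walks. -/
abbrev Route (V : Type*) := V × V × List V × List V × List V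

/-- A valid route of a client with source `s`, destination `d`, static sources `Vk`. -/
def RouteOK {V : Type*} (E : V → V → Prop) (s d : V) (Vk : Set V) : Route V → Prop :=
  fun ρ => ρ.2.1 ∈ Vk ∧ IsWalk E s ρ.1 ρ.2.2.1 ∧ IsWalk E ρ.2.1 ρ.1 ρ.2.2.2.1 ∧
    IsWalk E ρ.1 d ρ.2.2.2.2

/-- A cycle-free route: all three walks are node-repetition free. -/
def CycleFree {V : Type*} : Route V → Prop :=
  fun ρ => ρ.2.2.1.Nodup ∧ ρ.2.2.2.1.Nodup ∧ ρ.2.2.2.2.Nodup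

/-- Processing load of a route on node `i`: `r · 1{processing happens at i}`. -/
def loadN {V : Type*} [DecidableEq V] (r : ℝ) (i : V) : Route V → ℝ :=
  fun ρ => if ρ.1 = i then r else 0

/-- Transmission load of a route on link `(i,j)` (with multiplicity for walks):
`#live crossings + ζ·#static crossings + ξ·#output crossings`. -/
def loadL {V : Type*} [DecidableEq V] (zeta xi : ℝ) (i j : V) : Route V → ℝ :=
  fun ρ => (countEdge ρ.2.2.1 i j : ℝ) + zeta * (countEdge ρ.2.2.2.1 i j : ℝ)
    + xi * (countEdge ρ.2.2.2.2 i j : ℝ)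

/-!
Loop erasure turns a walk into a walk without repeated nodes, with the same endpoints, whose list
of consecutive pairs is a sublist of the original one; so no edge is crossed more often. Pushing
each route distribution forward along the loop erasure of its three walks keeps the total mass,
the validity of the routes in the support and the processing location, and can only decrease
the link loads; the capacity constraints, monotone in the loads since `λ, ζ, ξ ≥ 0`, survive.
-/

namespace List

variable {α : Type*}

theorem isChain_iff_forall_mem_zip_tail {R : α → α → Prop} {l : List α} :
    l.IsChain R ↔ ∀ p ∈ l.zip l.tail, R p.1 p.2 := by
  induction l with
  | nil => simp
  | cons a t ih => cases t <;> simp_all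

theorem zip_tail_tail_suffix (l : List α) : l.tail.zip l.tail.tail <:+ l.zip l.tail := by
  rcases l with _ | ⟨a, _ | ⟨b, t⟩⟩ <;> simp

theorem drop_zip_tail_suffix (l : List α) :
    ∀ n, (l.drop n).zip (l.drop n).tail <:+ l.zip l.tail
  | 0 => suffix_refl _
  | n + 1 => by
    rw [← tail_drop]
    exact (zip_tail_tail_suffix _).trans (drop_zip_tail_suffix l n)

theorem zip_tail_cons_sublist (a : α) {l₁ l₂ : List α} (hhead : l₁.head? = l₂.head?)
    (h : l₁.zip l₁.tail <+ l₂.zip l₂.tail) : (a :: l₁).zip l₁ <+ (a :: l₂).zip l₂ := by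
  rcases l₁ with _ | ⟨b, u⟩
  · simp
  rcases l₂ with _ | ⟨c, v⟩ <;>
    simp only [head?_cons, head?_nil, reduceCtorEq, Option.some.injEq] at hhead
  subst hhead
  simpa using h.cons_cons (a, b)

variable [DecidableEq α]

/-- Chronological (Lawler) loop erasure of a walk. -/
def loopErase : List α → List α
  | [] => []
  | a :: t => if a ∈ t then loopErase (t.drop (t.idxOf a)) else a :: loopErase t
termination_by l => l.length
decreasing_by all_goals simp only [length_cons, length_drop]; omega

theorem loopErase_subset : ∀ l : List α, l.loopErase ⊆ l := by
  intro l
  induction l using loopErase.induct with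
  | case1 => simp [loopErase]
  | case2 a t h ih =>
    rw [loopErase, if_pos h]
    exact fun x hx => mem_cons_of_mem a (mem_of_mem_drop (ih hx))
  | case3 a t h ih =>
    rw [loopErase, if_neg h]
    exact cons_subset_cons a ih

theorem nodup_loopErase : ∀ l : List α, l.loopErase.Nodup := by
  intro l
  induction l using loopErase.induct with
  | case1 => simp [loopErase]
  | case2 a t h ih => rwa [loopErase, if_pos h]
  | case3 a t h ih =>
    rw [loopErase, if_neg h]
    exact nodup_cons.2 ⟨fun ha => h (loopErase_subset t ha), ih⟩

theorem head?_loopErase : ∀ l : List α, l.loopErase.head? = l.head? := by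
  intro l
  induction l using loopErase.induct with
  | case1 => simp [loopErase]
  | case2 a t h ih =>
    rw [loopErase, if_pos h, ih, head?_drop, getElem?_idxOf h]
    rfl
  | case3 a t h ih => simp [loopErase, h]

theorem getLast?_loopErase : ∀ l : List α, l.loopErase.getLast? = l.getLast? := by
  intro l
  induction l using loopErase.induct with
  | case1 => simp [loopErase]
  | case2 a t h ih =>
    have : t.idxOf a < t.length := idxOf_lt_length_iff.2 h
    rw [loopErase, if_pos h, ih, getLast?_drop, if_neg (by omega), getLast?_cons,
      getLast?_eq_some_getLast (ne_nil_of_mem h)]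
    rfl
  | case3 a t h ih => rw [loopErase, if_neg h, getLast?_cons, getLast?_cons, ih]

theorem zip_tail_loopErase_sublist :
    ∀ l : List α, l.loopErase.zip l.loopErase.tail <+ l.zip l.tail := by
  intro l
  induction l using loopErase.induct with
  | case1 => simp [loopErase]
  | case2 a t h ih =>
    rw [loopErase, if_pos h]
    exact ih.trans ((drop_zip_tail_suffix t _).sublist.trans
      (zip_tail_tail_suffix (a :: t)).sublist)
  | case3 a t h ih =>
    rw [loopErase, if_neg h]
    exact zip_tail_cons_sublist a (head?_loopErase t) ih

theorem IsChain.loopErase {R : α → α → Prop} {l : List α} (h : l.IsChain R) :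
    l.loopErase.IsChain R :=
  isChain_iff_forall_mem_zip_tail.2 fun _ hp =>
    isChain_iff_forall_mem_zip_tail.1 h _ ((zip_tail_loopErase_sublist l).subset hp)

end List

section LoopErasure

variable {V : Type*} [DecidableEq V]

theorem IsWalk.loopErase {E : V → V → Prop} {u v : V} {l : List V} (h : IsWalk E u v l) :
    IsWalk E u v l.loopErase :=
  ⟨h.1.loopErase, (l.head?_loopErase).trans h.2.1, (l.getLast?_loopErase).trans h.2.2⟩

theorem countEdge_loopErase_le (l : List V) (i j : V) :
    countEdge l.loopErase i j ≤ countEdge l i j :=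
  (l.zip_tail_loopErase_sublist).count_le _

def Route.loopErase (ρ : Route V) : Route V :=
  (ρ.1, ρ.2.1, ρ.2.2.1.loopErase, ρ.2.2.2.1.loopErase, ρ.2.2.2.2.loopErase)

theorem RouteOK.loopErase {E : V → V → Prop} {s d : V} {Vk : Set V} {ρ : Route V}
    (h : RouteOK E s d Vk ρ) : RouteOK E s d Vk (Route.loopErase ρ) :=
  ⟨h.1, h.2.1.loopErase, h.2.2.1.loopErase, h.2.2.2.loopErase⟩

theorem cycleFree_loopErase (ρ : Route V) : CycleFree (Route.loopErase ρ) :=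
  ⟨List.nodup_loopErase _, List.nodup_loopErase _, List.nodup_loopErase _⟩

theorem loadL_nonneg {zeta xi : ℝ} (hzeta : 0 ≤ zeta) (hxi : 0 ≤ xi) (i j : V) (ρ : Route V) :
    0 ≤ loadL zeta xi i j ρ := by
  unfold loadL
  positivity

theorem loadL_loopErase_le {zeta xi : ℝ} (hzeta : 0 ≤ zeta) (hxi : 0 ≤ xi) (i j : V)
    (ρ : Route V) : loadL zeta xi i j (Route.loopErase ρ) ≤ loadL zeta xi i j ρ := by
  unfold loadL Route.loopErase
  gcongr <;> exact_mod_cast countEdge_loopErase_le _ i j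

end LoopErasure

section Pushforward

variable {α β : Type*}

noncomputable def pushforward (F : α → β) (P : α → ℝ) (b : β) : ℝ :=
  ∑' a : F ⁻¹' {b}, P a

variable {F : α → β} {P : α → ℝ}

theorem pushforward_nonneg (hP : ∀ a, 0 ≤ P a) (b : β) : 0 ≤ pushforward F P b :=
  tsum_nonneg fun a => hP a

theorem exists_of_pushforward_ne_zero {b : β} (h : pushforward F P b ≠ 0) :
    ∃ a, F a = b ∧ P a ≠ 0 := by
  by_contra! hzero
  exact h ((tsum_congr fun a : F ⁻¹' {b} => hzero a a.2).trans tsum_zero)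

theorem hasSum_mul_pushforward (g : β → ℝ) (hg : Summable fun a => g (F a) * P a) :
    HasSum (fun b => g b * pushforward F P b) (∑' a, g (F a) * P a) := by
  refine (hg.hasSum.tsum_fiberwise F).congr_fun fun b => ?_
  rw [pushforward, ← tsum_mul_left]
  exact tsum_congr fun a => by rw [show F a = b from a.2]

theorem hasSum_pushforward (hP : Summable P) : HasSum (pushforward F P) (∑' a, P a) := by
  simpa using hasSum_mul_pushforward (F := F) (fun _ => 1) (by simpa using hP)

end Pushforward

theorem acyclic_routes_suffice_general {V Cl : Type*} [DecidableEq V] [Fintype Cl]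
    (E : V → V → Prop) (s d : Cl → V) (Vk : Cl → Set V)
    (r zeta xi : Cl → ℝ) (hzeta : ∀ c, 0 ≤ zeta c)
    (hxi : ∀ c, 0 ≤ xi c)
    (lam : Cl → ℝ) (hlam : ∀ c, 0 ≤ lam c)
    (Cn : V → ℝ) (Cle : V → V → ℝ)
    (P : Cl → Route V → ℝ)
    (hPnn : ∀ c ρ, 0 ≤ P c ρ)
    (hPsupp : ∀ c ρ, P c ρ ≠ 0 → RouteOK E (s c) (d c) (Vk c) ρ)
    (hPsum : ∀ c, Summable (P c))
    (hP1 : ∀ c, (∑' ρ : Route V, P c ρ) = 1)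
    (hSumN : ∀ c i, Summable (fun ρ => loadN (r c) i ρ * P c ρ))
    (hSumL : ∀ c i j, Summable (fun ρ => loadL (zeta c) (xi c) i j ρ * P c ρ))
    (hCapN : ∀ i : V,
      ∑ c : Cl, lam c * ∑' ρ : Route V, loadN (r c) i ρ * P c ρ ≤ Cn i)
    (hCapL : ∀ i j : V,
      ∑ c : Cl, lam c * ∑' ρ : Route V, loadL (zeta c) (xi c) i j ρ * P c ρ
        ≤ Cle i j) :
    ∃ P' : Cl → Route V → ℝ,
      (∀ c ρ, 0 ≤ P' c ρ) ∧
      (∀ c ρ, P' c ρ ≠ 0 → RouteOK E (s c) (d c) (Vk c) ρ ∧ CycleFree ρ) ∧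
      (∀ c, Summable (P' c)) ∧
      (∀ c, (∑' ρ : Route V, P' c ρ) = 1) ∧
      (∀ c i, Summable (fun ρ => loadN (r c) i ρ * P' c ρ)) ∧
      (∀ c i j, Summable (fun ρ => loadL (zeta c) (xi c) i j ρ * P' c ρ)) ∧
      (∀ i : V,
        ∑ c : Cl, lam c * ∑' ρ : Route V, loadN (r c) i ρ * P' c ρ ≤ Cn i) ∧
      (∀ i j : V,
        ∑ c : Cl, lam c * ∑' ρ : Route V, loadL (zeta c) (xi c) i j ρ * P' c ρ
          ≤ Cle i j) := by
  have hle : ∀ c i j ρ, loadL (zeta c) (xi c) i j (Route.loopErase ρ) * P c ρ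
      ≤ loadL (zeta c) (xi c) i j ρ * P c ρ := fun c i j ρ =>
    mul_le_mul_of_nonneg_right (loadL_loopErase_le (hzeta c) (hxi c) i j ρ) (hPnn c ρ)
  -- loop erasure does not move the processing location
  have hSumN' : ∀ c i,
      Summable fun ρ => loadN (r c) i (Route.loopErase ρ) * P c ρ := hSumN
  have hSumL' : ∀ c i j,
      Summable fun ρ => loadL (zeta c) (xi c) i j (Route.loopErase ρ) * P c ρ := fun c i j =>
    (hSumL c i j).of_nonneg_of_le
      (fun ρ => mul_nonneg (loadL_nonneg (hzeta c) (hxi c) i j _) (hPnn c ρ)) (hle c i j)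
  refine ⟨fun c => pushforward Route.loopErase (P c), fun c => pushforward_nonneg (hPnn c),
    fun c ρ hρ => ?_, fun c => (hasSum_pushforward (hPsum c)).summable,
    fun c => (hasSum_pushforward (hPsum c)).tsum_eq.trans (hP1 c),
    fun c i => (hasSum_mul_pushforward _ (hSumN' c i)).summable,
    fun c i j => (hasSum_mul_pushforward _ (hSumL' c i j)).summable, fun i => ?_, fun i j => ?_⟩
  · obtain ⟨σ, rfl, hσ⟩ := exists_of_pushforward_ne_zero hρ
    exact ⟨(hPsupp c σ hσ).loopErase, cycleFree_loopErase σ⟩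
  · convert hCapN i using 3 with c
    exact (hasSum_mul_pushforward _ (hSumN' c i)).tsum_eq
  · refine (Finset.sum_le_sum fun c _ => mul_le_mul_of_nonneg_left ?_ (hlam c)).trans
      (hCapL i j)
    rw [(hasSum_mul_pushforward _ (hSumL' c i j)).tsum_eq]
    exact (hSumL' c i j).tsum_le_tsum (hle c i j) (hSumL c i j)

/-- Restricting to acyclic routes does not reduce the stability region: if an arrival
vector `λ` is supported by route-selection probabilities over (possibly cyclic)
routes satisfying the node and link capacity constraints, then it is also supported
by probabilities over cycle-free routes (removing cycles from any route weakly
decreases every resource load). -/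
theorem acyclic_routes_suffice {V Cl : Type*} [Fintype V] [DecidableEq V] [Fintype Cl]
    (E : V → V → Prop) (s d : Cl → V) (Vk : Cl → Set V)
    (r zeta xi : Cl → ℝ) (hr : ∀ c, 0 ≤ r c) (hzeta : ∀ c, 0 ≤ zeta c)
    (hxi : ∀ c, 0 ≤ xi c)
    (lam : Cl → ℝ) (hlam : ∀ c, 0 ≤ lam c)
    (Cn : V → ℝ) (Cle : V → V → ℝ)
    (P : Cl → Route V → ℝ)
    (hPnn : ∀ c ρ, 0 ≤ P c ρ)
    (hPsupp : ∀ c ρ, P c ρ ≠ 0 → RouteOK E (s c) (d c) (Vk c) ρ)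
    (hPsum : ∀ c, Summable (P c))
    (hP1 : ∀ c, (∑' ρ : Route V, P c ρ) = 1)
    (hSumN : ∀ c i, Summable (fun ρ => loadN (r c) i ρ * P c ρ))
    (hSumL : ∀ c i j, Summable (fun ρ => loadL (zeta c) (xi c) i j ρ * P c ρ))
    (hCapN : ∀ i : V,
      ∑ c : Cl, lam c * ∑' ρ : Route V, loadN (r c) i ρ * P c ρ ≤ Cn i)
    (hCapL : ∀ i j : V,
      ∑ c : Cl, lam c * ∑' ρ : Route V, loadL (zeta c) (xi c) i j ρ * P c ρ
        ≤ Cle i j) :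
    ∃ P' : Cl → Route V → ℝ,
      (∀ c ρ, 0 ≤ P' c ρ) ∧
      (∀ c ρ, P' c ρ ≠ 0 → RouteOK E (s c) (d c) (Vk c) ρ ∧ CycleFree ρ) ∧
      (∀ c, Summable (P' c)) ∧
      (∀ c, (∑' ρ : Route V, P' c ρ) = 1) ∧
      (∀ c i, Summable (fun ρ => loadN (r c) i ρ * P' c ρ)) ∧
      (∀ c i j, Summable (fun ρ => loadL (zeta c) (xi c) i j ρ * P' c ρ)) ∧
      (∀ i : V,
        ∑ c : Cl, lam c * ∑' ρ : Route V, loadN (r c) i ρ * P' c ρ ≤ Cn i) ∧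
      (∀ i j : V,
        ∑ c : Cl, lam c * ∑' ρ : Route V, loadL (zeta c) (xi c) i j ρ * P' c ρ
          ≤ Cle i j) :=
  acyclic_routes_suffice_general E s d Vk r zeta xi hzeta hxi lam hlam Cn Cle P hPnn hPsupp hPsum
    hP1 hSumN hSumL hCapN hCapL
end
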